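/- Let E be a finite-dimensional real inner product space, let p ≥ 2 and a > 0 be real numbers, and set b = a/p. Let β : E → ℝ be a twice continuously differentiable function with ‖∇β(x)‖ = 1 for every x ∈ E. If the function g = e^{bβ} satisfies Δ_p g (x) = - b^p · g(x)^{p-1} for every x ∈ E, then Δβ(x) = -a for every x ∈ E. -/

import Mathlib

open Real RealInnerProductSpace

/-- The divergence of a vector field `X : E → E` at `x`: the trace of its Fréchet
derivative at `x`. -/
noncomputable def vectorDiv {E : Type*} [NormedAddCommGroup E] [InnerProductSpace ℝ E]
    (X : E → E) (x : E) : ℝ :=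
  LinearMap.trace ℝ E (fderiv ℝ X x : E →ₗ[ℝ] E)

/-- The `p`-Laplacian `Δ_p u = div(‖∇u‖^{p-2} ∇u)`. -/
noncomputable def pLaplacian {E : Type*} [NormedAddCommGroup E] [InnerProductSpace ℝ E]
    [CompleteSpace E] (p : ℝ) (u : E → ℝ) : E → ℝ :=
  vectorDiv (fun x => ‖gradient u x‖ ^ (p - 2) • gradient u x)

/-- The Laplacian `Δu = div(∇u)`. -/
noncomputable def laplacian {E : Type*} [NormedAddCommGroup E] [InnerProductSpace ℝ E]
    [CompleteSpace E] (u : E → ℝ) : E → ℝ :=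
  vectorDiv (gradient u)

/-!
With `g = exp (b β)` and `‖∇β‖ = 1` one has `∇g = b g ∇β`, so the `p`-Laplacian vector field is
`‖∇g‖^(p-2) ∇g = (b g)^(p-1) ∇β = φ(β) ∇β` with `φ t = b^(p-1) exp ((p-1) b t)`. The product
rule for the divergence gives `Δ_p g = φ(β) (Δβ + (p-1) b ‖∇β‖²) = φ(β) (Δβ + (p-1) b)`, while
the right-hand side of the equation is `-b^p g^(p-1) = -b φ(β)`. Cancelling `φ(β) > 0` leaves
`Δβ = -p b = -a`.
-/

open InnerProductSpace

section

variable {E : Type*} [NormedAddCommGroup E] [InnerProductSpace ℝ E]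

theorem HasDerivAt.comp_hasGradientAt [CompleteSpace E] {h : ℝ → ℝ} {h' : ℝ} {u : E → ℝ} {g x : E}
    (hh : HasDerivAt h h' (u x)) (hu : HasGradientAt u g x) :
    HasGradientAt (h ∘ u) (h' • g) x := by
  rw [hasGradientAt_iff_hasFDerivAt, map_smulₛₗ]
  exact hh.comp_hasFDerivAt x hu.hasFDerivAt

theorem ContDiff.differentiable_gradient [CompleteSpace E] {n : WithTop ℕ∞} {u : E → ℝ}
    (hu : ContDiff ℝ n u) (hn : 2 ≤ n) : Differentiable ℝ (gradient u) :=
  (toDual ℝ E).symm.differentiable.comp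
    ((hu.fderiv_right (m := 1) hn).differentiable one_ne_zero)

theorem vectorDiv_smul [FiniteDimensional ℝ E] {f : E → ℝ} {X : E → E} {x : E}
    (hf : DifferentiableAt ℝ f x) (hX : DifferentiableAt ℝ X x) :
    vectorDiv (fun y => f y • X y) x = f x * vectorDiv X x + fderiv ℝ f x (X x) := by
  rw [vectorDiv, vectorDiv, fderiv_fun_smul hf hX, ContinuousLinearMap.toLinearMap_add,
    ContinuousLinearMap.toLinearMap_smul, map_add, map_smul, smul_eq_mul]
  exact congrArg _ (LinearMap.trace_smulRight (fderiv ℝ f x : E →ₗ[ℝ] ℝ) (X x))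

theorem vectorDiv_comp_smul_gradient [FiniteDimensional ℝ E] {φ : ℝ → ℝ} {φ' : ℝ} {u : E → ℝ}
    {x : E} (hφ : HasDerivAt φ φ' (u x)) (hu : DifferentiableAt ℝ u x)
    (hgu : DifferentiableAt ℝ (gradient u) x) :
    vectorDiv (fun y => φ (u y) • gradient u y) x
      = φ (u x) * laplacian u x + φ' * ‖gradient u x‖ ^ 2 := by
  have hφu := hφ.comp_hasGradientAt hu.hasGradientAt
  refine (vectorDiv_smul (f := φ ∘ u) hφu.differentiableAt hgu).trans ?_
  rw [hφu.fderiv_apply, real_inner_smul_left, real_inner_self_eq_norm_sq]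
  rfl

theorem norm_smul_rpow_smul {c : ℝ} (hc : 0 < c) {v : E} (hv : ‖v‖ = 1) (p : ℝ) :
    ‖c • v‖ ^ (p - 2) • (c • v) = c ^ (p - 1) • v := by
  rw [norm_smul, hv, mul_one, Real.norm_of_nonneg hc.le, smul_smul, ← Real.rpow_add_one hc.ne']
  ring_nf

theorem pLaplacian_exp_mul_of_norm_gradient_eq_one [FiniteDimensional ℝ E] {p b : ℝ} (hb : 0 < b)
    {β : E → ℝ} (hβ : ContDiff ℝ 2 β) (hβgrad : ∀ x, ‖gradient β x‖ = 1) (x : E) :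
    pLaplacian p (fun y => exp (b * β y)) x
      = b ^ (p - 1) * exp ((p - 1) * b * β x) * (laplacian β x + (p - 1) * b) := by
  set φ : ℝ → ℝ := fun t => b ^ (p - 1) * exp ((p - 1) * b * t)
  have hφ (t : ℝ) : HasDerivAt φ (φ t * ((p - 1) * b)) t := by
    simpa [φ, mul_assoc] using
      (((hasDerivAt_id t).const_mul ((p - 1) * b)).exp).const_mul (b ^ (p - 1))
  have hgrad_exp (y : E) :
      gradient (fun z => exp (b * β z)) y = (b * exp (b * β y)) • gradient β y := by
    have hexp : HasDerivAt (fun t => exp (b * t)) (b * exp (b * β y)) (β y) := by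
      simpa [mul_comm] using ((hasDerivAt_id (β y)).const_mul b).exp
    exact (hexp.comp_hasGradientAt ((hβ.differentiable two_ne_zero) y).hasGradientAt).gradient
  have hfield : (fun y => ‖gradient (fun z => exp (b * β z)) y‖ ^ (p - 2)
      • gradient (fun z => exp (b * β z)) y) = fun y => φ (β y) • gradient β y := by
    funext y
    rw [hgrad_exp, norm_smul_rpow_smul (by positivity) (hβgrad y),
      Real.mul_rpow hb.le (exp_pos _).le, ← exp_mul]
    simp only [φ]
    ring_nf
  rw [pLaplacian, hfield, vectorDiv_comp_smul_gradient (hφ (β x))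
    ((hβ.differentiable two_ne_zero) x) ((hβ.differentiable_gradient le_rfl) x), hβgrad]
  ring

end

theorem laplacian_eq_of_pLaplacian_exp_eq
    {E : Type*} [NormedAddCommGroup E] [InnerProductSpace ℝ E] [FiniteDimensional ℝ E]
    (p a b : ℝ) (hp : 2 ≤ p) (ha : 0 < a) (hb : b = a / p)
    (β : E → ℝ) (hβ : ContDiff ℝ 2 β) (hβgrad : ∀ x, ‖gradient β x‖ = 1)
    (heq : ∀ x, pLaplacian p (fun y => Real.exp (b * β y)) x
      = -b ^ p * Real.exp (b * β x) ^ (p - 1)) :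
    ∀ x, laplacian β x = -a := by
  intro x
  have hp_pos : 0 < p := by linarith
  have hb_pos : 0 < b := hb ▸ div_pos ha hp_pos
  have hrhs :
      -b ^ p * exp (b * β x) ^ (p - 1) = b ^ (p - 1) * exp ((p - 1) * b * β x) * -b := by
    rw [← exp_mul, Real.rpow_sub_one hb_pos.ne']
    field_simp
  have key := heq x
  rw [pLaplacian_exp_mul_of_norm_gradient_eq_one hb_pos hβ hβgrad, hrhs] at key
  have hcancel : laplacian β x + (p - 1) * b = -b := mul_left_cancel₀ (by positivity) key
  rw [show laplacian β x = -(p * b) by linarith, hb]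
  field_simp
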